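/- arXiv:2501.03522 — 5 statements merged into one kernel-verified Lean document; each statement's English description precedes it below -/
import Mathlib

section
/- Let G be a finite group, A an abelian subgroup of G of index 2, and b an element of G not in A. Then for all a, a' ∈ A, the setwise product of the conjugacy class of a and the conjugacy class of a'·b equals the conjugacy class of a·a'·b: Cl(a)·Cl(a'·b) = Cl(a·a'·b). -/
open scoped Pointwise

/-- Let `G` be a finite group, `A` an abelian subgroup of `G` of index 2, and `b ∈ G \ A`.
Then for all `a, a' ∈ A`, the setwise product of the conjugacy class of `a` and the
conjugacy class of `a' * b` equals the conjugacy class of `a * a' * b`. -/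
theorem stmt_13 {G : Type*} [Group G] [Finite G] (A : Subgroup G)
    (hcomm : ∀ x ∈ A, ∀ y ∈ A, x * y = y * x) (hidx : A.index = 2)
    (b : G) (hb : b ∉ A) :
    ∀ a ∈ A, ∀ a' ∈ A,
      conjugatesOf a * conjugatesOf (a' * b) = conjugatesOf (a * a' * b) := by
  have hmul : ∀ {x y : G}, x * y ∈ A ↔ (x ∈ A ↔ y ∈ A) := fun {x y} =>
    Subgroup.mul_mem_iff_of_index_two hidx
  have hb2 : b * b ∈ A := Subgroup.mul_self_mem_of_index_two hidx b
  have hbinv : b⁻¹ ∉ A := fun h => hb (by simpa using A.inv_mem h)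
  have hτmem : ∀ {x : G}, x ∈ A → b * x * b⁻¹ ∈ A := by
    intro x hx
    refine hmul.2 ?_
    simp only [hbinv, iff_false]
    exact fun h => hb (by simpa using A.inv_mem (hmul.1 h |>.2 hx))
  have hswap' : ∀ {x : G}, x ∈ A → b * (b * x * b⁻¹) = x * b := by
    intro x hx
    have h2 : (b * b) * x = x * (b * b) := hcomm _ hb2 _ hx
    calc b * (b * x * b⁻¹) = ((b * b) * x) * b⁻¹ := by group
      _ = (x * (b * b)) * b⁻¹ := by rw [h2]
      _ = x * b := by group
  intro a ha a' ha'
  obtain ⟨t, htdef⟩ : ∃ t, t = b * a * b⁻¹ := ⟨_, rfl⟩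
  obtain ⟨t', ht'def⟩ : ∃ t', t' = b * a' * b⁻¹ := ⟨_, rfl⟩
  have htA : t ∈ A := htdef ▸ hτmem ha
  have ht'A : t' ∈ A := ht'def ▸ hτmem ha'
  have hba : b * a = t * b := by rw [htdef]; group
  have hba' : b * a' = t' * b := by rw [ht'def]; group
  have hbt : b * t = a * b := by rw [htdef]; exact hswap' ha
  have hbt' : b * t' = a' * b := by rw [ht'def]; exact hswap' ha'
  have hbtinv : b * t⁻¹ = a⁻¹ * b := by
    have h1 : t = b⁻¹ * (a * b) := by rw [← hbt]; group
    rw [h1]; group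
  have hbt'inv : b * t'⁻¹ = a'⁻¹ * b := by
    have h1 : t' = b⁻¹ * (a' * b) := by rw [← hbt']; group
    rw [h1]; group
  ext g
  constructor
  · rintro ⟨u, hu, v, hv, rfl⟩
    obtain ⟨x, hx⟩ := isConj_iff.1 hu
    obtain ⟨y, hy⟩ := isConj_iff.1 hv
    have hured : u = a ∨ u = t := by
      by_cases hxA : x ∈ A
      · left
        rw [← hx, hcomm _ hxA _ ha]; group
      · right
        have hw : x * b⁻¹ ∈ A := hmul.2 (by simp [hxA, hbinv])
        have hxe : x = (x * b⁻¹) * b := by group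
        rw [← hx, hxe]
        calc ((x * b⁻¹) * b) * a * (((x * b⁻¹) * b))⁻¹
            = (x * b⁻¹) * ((b * a) * b⁻¹) * (x * b⁻¹)⁻¹ := by group
          _ = (x * b⁻¹) * ((t * b) * b⁻¹) * (x * b⁻¹)⁻¹ := by rw [hba]
          _ = (x * b⁻¹) * t * (x * b⁻¹)⁻¹ := by group
          _ = (t * (x * b⁻¹)) * (x * b⁻¹)⁻¹ := by
              rw [mul_assoc (x * b⁻¹), ← mul_assoc, hcomm _ hw _ htA]
          _ = t := by group
    show IsConj (a * a' * b) (u * v)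
    rw [isConj_iff]
    by_cases hyA : y ∈ A
    · rcases hured with h | h <;> rw [h]
      · refine ⟨y, ?_⟩
        rw [← hy]
        calc y * (a * a' * b) * y⁻¹ = (y * a) * (a' * b) * y⁻¹ := by group
          _ = (a * y) * (a' * b) * y⁻¹ := by rw [hcomm _ hyA _ ha]
          _ = a * (y * (a' * b) * y⁻¹) := by group
      · refine ⟨y * t, ?_⟩
        rw [← hy]
        calc (y * t) * (a * a' * b) * (y * t)⁻¹
            = (y * t) * (a * a') * (b * t⁻¹) * y⁻¹ := by group
          _ = (y * t) * (a * a') * (a⁻¹ * b) * y⁻¹ := by rw [hbtinv]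
          _ = y * (t * (a * a') * a⁻¹) * b * y⁻¹ := by group
          _ = y * (t * (a' * a) * a⁻¹) * b * y⁻¹ := by rw [hcomm _ ha _ ha']
          _ = y * (t * a') * b * y⁻¹ := by group
          _ = y * (a' * t) * b * y⁻¹ := by rw [hcomm _ htA _ ha']
          _ = ((y * a') * t) * (b * y⁻¹) := by group
          _ = (t * (y * a')) * (b * y⁻¹) := by
              rw [hcomm _ (A.mul_mem hyA ha') _ htA]
          _ = t * (y * (a' * b) * y⁻¹) := by group
    · have hz : y * b⁻¹ ∈ A := hmul.2 (by simp [hyA, hbinv])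
      have hye : y = (y * b⁻¹) * b := by group
      set z := y * b⁻¹ with hzdef
      have hv' : v = z * t' * b * z⁻¹ := by
        rw [← hy, hye]
        calc ((z * b)) * (a' * b) * ((z * b))⁻¹
            = z * (b * a') * z⁻¹ := by group
          _ = z * (t' * b) * z⁻¹ := by rw [hba']
          _ = z * t' * b * z⁻¹ := by group
      rcases hured with h | h <;> rw [h]
      · refine ⟨z * t', ?_⟩
        rw [hv']
        calc (z * t') * (a * a' * b) * (z * t')⁻¹
            = (z * t') * (a * a') * (b * t'⁻¹) * z⁻¹ := by group
          _ = (z * t') * (a * a') * (a'⁻¹ * b) * z⁻¹ := by rw [hbt'inv]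
          _ = z * (t' * a) * b * z⁻¹ := by group
          _ = z * (a * t') * b * z⁻¹ := by rw [hcomm _ ht'A _ ha]
          _ = ((z * a) * t') * (b * z⁻¹) := by group
          _ = ((a * z) * t') * (b * z⁻¹) := by rw [hcomm _ hz _ ha]
          _ = a * (z * t' * b * z⁻¹) := by group
      · refine ⟨z * b, ?_⟩
        rw [hv']
        calc (z * b) * (a * a' * b) * (z * b)⁻¹
            = z * (b * a) * a' * z⁻¹ := by group
          _ = z * (t * b) * a' * z⁻¹ := by rw [hba]
          _ = (z * t) * (b * a') * z⁻¹ := by group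
          _ = (z * t) * (t' * b) * z⁻¹ := by rw [hba']
          _ = (t * z) * (t' * b) * z⁻¹ := by rw [hcomm _ hz _ htA]
          _ = t * (z * t' * b * z⁻¹) := by group
  · intro hg
    obtain ⟨c, hc⟩ := isConj_iff.1 (show IsConj (a * a' * b) g from hg)
    refine ⟨c * a * c⁻¹, isConj_iff.2 ⟨c, rfl⟩, c * (a' * b) * c⁻¹,
      isConj_iff.2 ⟨c, rfl⟩, ?_⟩
    rw [← hc]; group
end

section
/- Let G be a finite group, A an abelian subgroup of G of index 2, and b an element of G not in A. Then for all a, a' ∈ A, the setwise product Cl(a·b)·Cl(a'·b) of the conjugacy classes of a·b and a'·b equals the coset {x·a·(b·a'·b⁻¹)·b² : x ∈ B} of B in A, where B = {(b·c·b⁻¹)·c⁻¹ : c ∈ A}. -/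
open scoped Pointwise

/-- Let `G` be a finite group, `A` an abelian subgroup of `G` of index 2, and `b ∈ G \ A`.
Then for all `a, a' ∈ A`, the setwise product `Cl(a * b) * Cl(a' * b)` of the conjugacy
classes of `a * b` and `a' * b` equals the coset `{x * (a * (b * a' * b⁻¹) * b²) : x ∈ B}`
of `B` in `A`, where `B = {(b * c * b⁻¹) * c⁻¹ : c ∈ A}`. -/
theorem stmt_14 {G : Type*} [Group G] [Finite G] (A : Subgroup G)
    (hcomm : ∀ x ∈ A, ∀ y ∈ A, x * y = y * x) (hidx : A.index = 2)
    (b : G) (hb : b ∉ A)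
    (B : Set G) (hB : B = {x : G | ∃ c ∈ A, b * c * b⁻¹ * c⁻¹ = x}) :
    ∀ a ∈ A, ∀ a' ∈ A,
      conjugatesOf (a * b) * conjugatesOf (a' * b)
        = {y : G | ∃ x ∈ B, x * (a * (b * a' * b⁻¹) * b ^ 2) = y} := by
  subst hB
  haveI : IsMulCommutative A := ⟨⟨fun x y => Subtype.ext (hcomm x x.2 y y.2)⟩⟩
  have hmul : ∀ x y : G, x * y ∈ A ↔ (x ∈ A ↔ y ∈ A) := fun x y =>
    Subgroup.mul_mem_iff_of_index_two hidx
  have hbinv : b⁻¹ ∉ A := fun h => hb (A.inv_mem_iff.mp h)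
  have hφ : ∀ c, c ∈ A → b * c * b⁻¹ ∈ A := by
    intro c hc
    rw [hmul]
    simp [hmul, hc, hb, hbinv]
  have hb2 : b * b ∈ A := Subgroup.mul_self_mem_of_index_two hidx b
  have hφφ : ∀ c, c ∈ A → b * (b * c * b⁻¹) * b⁻¹ = c := by
    intro c hc
    have e : b * (b * c * b⁻¹) * b⁻¹ = (b * b) * c * (b * b)⁻¹ := by group
    rw [e, hcomm _ hb2 c hc]
    group
  intro a ha a' ha'
  -- key description of the conjugacy class of `a * b` for `a ∈ A`
  have key : ∀ a, a ∈ A → conjugatesOf (a * b) =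
      {x : G | ∃ c ∈ A, a * (b * c * b⁻¹ * c⁻¹) * b = x} := by
    intro a ha
    ext x
    simp only [conjugatesOf, Set.mem_setOf_eq, isConj_iff]
    constructor
    · rintro ⟨g, rfl⟩
      by_cases hg : g ∈ A
      · refine ⟨g⁻¹, A.inv_mem hg, ?_⟩
        have hu : b * g⁻¹ * b⁻¹ ∈ A := hφ _ (A.inv_mem hg)
        have e1 : g * (a * b) * g⁻¹ = g * (a * (b * g⁻¹ * b⁻¹)) * b := by group
        rw [inv_inv, e1, hcomm g hg _ (A.mul_mem ha hu)]
        group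
      · have hd : g * b⁻¹ ∈ A := by rw [hmul]; simp [hg, hbinv]
        set d := g * b⁻¹ with hdef
        have hgd : g = d * b := by rw [hdef]; group
        refine ⟨a * d⁻¹, A.mul_mem ha (A.inv_mem hd), ?_⟩
        rw [hgd]
        -- rewrite both sides into conjugation-normal form
        have eR : (d * b) * (a * b) * (d * b)⁻¹
            = d * ((b * a * b⁻¹) * (b * d * b⁻¹)⁻¹) * b := by group
        have eL : a * (b * (a * d⁻¹) * b⁻¹ * (a * d⁻¹)⁻¹) * b
            = (a * ((b * a * b⁻¹) * ((b * d * b⁻¹)⁻¹ * (d * a⁻¹)))) * b := by group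
        rw [eR, eL]
        congr 1
        -- a pure computation inside the abelian subgroup A
        have h : (⟨a, ha⟩ * (⟨_, hφ a ha⟩ * ((⟨_, hφ d hd⟩ : A)⁻¹ * (⟨d, hd⟩ * (⟨a, ha⟩ : A)⁻¹))) : A)
            = ⟨d, hd⟩ * (⟨_, hφ a ha⟩ * (⟨_, hφ d hd⟩ : A)⁻¹) := by
          calc (⟨a, ha⟩ * (⟨_, hφ a ha⟩ * ((⟨_, hφ d hd⟩ : A)⁻¹ * (⟨d, hd⟩ * (⟨a, ha⟩ : A)⁻¹))) : A)
              = (⟨d, hd⟩ * (⟨_, hφ a ha⟩ * (⟨_, hφ d hd⟩ : A)⁻¹)) * (⟨a, ha⟩ * (⟨a, ha⟩ : A)⁻¹) := by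
                ac_rfl
            _ = ⟨d, hd⟩ * (⟨_, hφ a ha⟩ * (⟨_, hφ d hd⟩ : A)⁻¹) := by
                rw [mul_inv_cancel, mul_one]
        have := congrArg (Subtype.val) h
        push_cast at this
        exact this
    · rintro ⟨c, hc, rfl⟩
      refine ⟨c⁻¹, ?_⟩
      have e1 : c⁻¹ * (a * b) * c⁻¹⁻¹ = (c⁻¹ * (a * (b * c * b⁻¹))) * b := by group
      have e2 : a * (b * c * b⁻¹ * c⁻¹) * b = (a * ((b * c * b⁻¹) * c⁻¹)) * b := by group
      rw [e1, e2]
      congr 1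
      have h : ((⟨c, hc⟩ : A)⁻¹ * (⟨a, ha⟩ * ⟨_, hφ c hc⟩) : A)
          = ⟨a, ha⟩ * (⟨_, hφ c hc⟩ * (⟨c, hc⟩ : A)⁻¹) := by ac_rfl
      have := congrArg (Subtype.val) h
      push_cast at this
      exact this
  rw [key a ha, key a' ha']
  ext x
  simp only [Set.mem_mul, Set.mem_setOf_eq]
  constructor
  · rintro ⟨_, ⟨c, hc, rfl⟩, _, ⟨d, hd, rfl⟩, rfl⟩
    refine ⟨_, ⟨c * d⁻¹, A.mul_mem hc (A.inv_mem hd), rfl⟩, ?_⟩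
    have eR : (a * (b * c * b⁻¹ * c⁻¹) * b) * (a' * (b * d * b⁻¹ * d⁻¹) * b)
        = a * ((b * c * b⁻¹) * (c⁻¹ * ((b * a' * b⁻¹) *
            ((b * (b * d * b⁻¹) * b⁻¹) * (b * d * b⁻¹)⁻¹)))) * (b * b) := by group
    have eL : (b * (c * d⁻¹) * b⁻¹ * (c * d⁻¹)⁻¹) * (a * (b * a' * b⁻¹) * b ^ 2)
        = ((b * c * b⁻¹) * ((b * d * b⁻¹)⁻¹ * (d * (c⁻¹ * (a * (b * a' * b⁻¹)))))) * (b * b) := by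
      group
    rw [eR, hφφ d hd, eL]
    congr 1
    have h : (⟨_, hφ c hc⟩ * ((⟨_, hφ d hd⟩ : A)⁻¹ * (⟨d, hd⟩ * ((⟨c, hc⟩ : A)⁻¹ *
          (⟨a, ha⟩ * ⟨_, hφ a' ha'⟩)))) : A)
        = ⟨a, ha⟩ * (⟨_, hφ c hc⟩ * ((⟨c, hc⟩ : A)⁻¹ * (⟨_, hφ a' ha'⟩ *
          (⟨d, hd⟩ * (⟨_, hφ d hd⟩ : A)⁻¹)))) := by ac_rfl
    have := congrArg (Subtype.val) h
    push_cast at this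
    exact this
  · rintro ⟨_, ⟨e, he, rfl⟩, rfl⟩
    refine ⟨a * (b * e * b⁻¹ * e⁻¹) * b, ⟨e, he, rfl⟩, a' * (b * (1:G) * b⁻¹ * (1:G)⁻¹) * b,
      ⟨1, A.one_mem, rfl⟩, ?_⟩
    have eL : (a * (b * e * b⁻¹ * e⁻¹) * b) * (a' * (b * 1 * b⁻¹ * (1:G)⁻¹) * b)
        = (a * ((b * e * b⁻¹) * (e⁻¹ * (b * a' * b⁻¹)))) * (b * b) := by group
    have eR : (b * e * b⁻¹ * e⁻¹) * (a * (b * a' * b⁻¹) * b ^ 2)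
        = ((b * e * b⁻¹) * (e⁻¹ * (a * (b * a' * b⁻¹)))) * (b * b) := by group
    rw [eL, eR]
    congr 1
    have h : (⟨a, ha⟩ * (⟨_, hφ e he⟩ * ((⟨e, he⟩ : A)⁻¹ * ⟨_, hφ a' ha'⟩)) : A)
        = ⟨_, hφ e he⟩ * ((⟨e, he⟩ : A)⁻¹ * (⟨a, ha⟩ * ⟨_, hφ a' ha'⟩)) := by ac_rfl
    have := congrArg (Subtype.val) h
    push_cast at this
    exact this
end

section
/- Let G be a finite group, A an abelian subgroup of G of index 2, and b an element of G not in A. Let σ : A → ℂ* be a group homomorphism satisfying σ(b·a·b⁻¹) = σ(a) for all a ∈ A. Then there exist exactly two group homomorphisms χ : G → ℂ* whose restriction to A equals σ. -/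
/-- Let `G` be a finite group, `A` an abelian subgroup of `G` of index 2, and `b ∈ G \ A`.
Let `σ : A → ℂ*` be a group homomorphism satisfying `σ(b * a * b⁻¹) = σ(a)` for all
`a ∈ A`.  Then there exist exactly two group homomorphisms `χ : G → ℂ*` whose
restriction to `A` equals `σ`. -/
theorem stmt_15 {G : Type*} [Group G] [Finite G] (A : Subgroup G)
    (hcomm : ∀ x ∈ A, ∀ y ∈ A, x * y = y * x) (hidx : A.index = 2)
    (b : G) (hb : b ∉ A)
    (σ : A →* ℂˣ)
    (hσ : ∀ (a : A) (h : b * (a : G) * b⁻¹ ∈ A), σ ⟨b * (a : G) * b⁻¹, h⟩ = σ a) :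
    Nat.card {χ : G →* ℂˣ // ∀ a : A, χ (a : G) = σ a} = 2 := by
  classical
  have hmul : ∀ x y : G, x * y ∈ A ↔ (x ∈ A ↔ y ∈ A) := fun x y =>
    Subgroup.mul_mem_iff_of_index_two hidx
  have hbinv : b⁻¹ ∉ A := fun h => hb (A.inv_mem_iff.mp h)
  have hmem : ∀ g : G, g ∉ A → b⁻¹ * g ∈ A := fun g hg =>
    (hmul b⁻¹ g).mpr (iff_of_false hbinv hg)
  have hbb : b * b ∈ A := (hmul b b).mpr Iff.rfl
  set c : ℂˣ := σ ⟨b * b, hbb⟩ with hc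
  have hconjmem : ∀ x ∈ A, b⁻¹ * x * b ∈ A := by
    intro x hx
    have h1 : b⁻¹ * x ∉ A := fun h => hbinv (((hmul b⁻¹ x).mp h).mpr hx)
    exact (hmul (b⁻¹ * x) b).mpr (iff_of_false h1 hb)
  have hconj : ∀ (x : G) (hx : x ∈ A) (hx' : b⁻¹ * x * b ∈ A),
      σ ⟨b⁻¹ * x * b, hx'⟩ = σ ⟨x, hx⟩ := by
    intro x hx hx'
    have h2 : b * (b⁻¹ * x * b) * b⁻¹ ∈ A := by
      have h3 : b * (b⁻¹ * x * b) * b⁻¹ = x := by group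
      rw [h3]; exact hx
    have h4 := hσ ⟨b⁻¹ * x * b, hx'⟩ h2
    have hx2 : (⟨b * (b⁻¹ * x * b) * b⁻¹, h2⟩ : A) = ⟨x, hx⟩ := by
      ext; group
    rw [hx2] at h4
    exact h4.symm
  have key : ∀ (z : ℂˣ), z * z = c → ∃ χ : G →* ℂˣ,
      (∀ a : A, χ (a : G) = σ a) ∧ χ b = z := by
    intro z hz
    refine ⟨{ toFun := fun g => if h : g ∈ A then σ ⟨g, h⟩ else z * σ ⟨b⁻¹ * g, hmem g h⟩
              map_one' := by
                simp only [dif_pos A.one_mem]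
                exact map_one σ
              map_mul' := ?_ }, ?_, ?_⟩
    · intro x y
      by_cases hx : x ∈ A <;> by_cases hy : y ∈ A
      · have hxy : x * y ∈ A := A.mul_mem hx hy
        simp only [dif_pos hx, dif_pos hy, dif_pos hxy]
        rw [← map_mul]; rfl
      · have hxy : x * y ∉ A := fun h => hy (((hmul x y).mp h).mp hx)
        simp only [dif_pos hx, dif_neg hy, dif_neg hxy]
        have e : (⟨b⁻¹ * (x * y), hmem _ hxy⟩ : A)
            = ⟨b⁻¹ * x * b, hconjmem x hx⟩ * ⟨b⁻¹ * y, hmem y hy⟩ := by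
          ext; push_cast; group
        rw [e, map_mul, hconj x hx]
        exact (mul_left_comm _ _ _).symm
      · have hxy : x * y ∉ A := fun h => hx (((hmul x y).mp h).mpr hy)
        simp only [dif_neg hx, dif_pos hy, dif_neg hxy]
        have e : (⟨b⁻¹ * (x * y), hmem _ hxy⟩ : A)
            = ⟨b⁻¹ * x, hmem x hx⟩ * ⟨y, hy⟩ := by
          ext; push_cast; group
        rw [e, map_mul, mul_assoc]
      · have hxy : x * y ∈ A := (hmul x y).mpr (iff_of_false hx hy)
        simp only [dif_neg hx, dif_neg hy, dif_pos hxy]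
        have e : (⟨x * y, hxy⟩ : A)
            = ⟨b * b, hbb⟩ * ⟨b⁻¹ * (b⁻¹ * x) * b, hconjmem _ (hmem x hx)⟩
              * ⟨b⁻¹ * y, hmem y hy⟩ := by
          ext; push_cast; group
        rw [e, map_mul, map_mul, hconj _ (hmem x hx), mul_mul_mul_comm, hz, hc, mul_assoc]
    · intro a
      simp [a.2]
    · simp only [MonoidHom.coe_mk, OneHom.coe_mk, dif_neg hb]
      have e : (⟨b⁻¹ * b, hmem b hb⟩ : A) = 1 := by ext; simp
      rw [e, map_one, mul_one]
  have uniq : ∀ (φ ψ : G →* ℂˣ), (∀ a : A, φ (a : G) = σ a) → (∀ a : A, ψ (a : G) = σ a) →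
      φ b = ψ b → φ = ψ := by
    intro φ ψ hφ hψ hbeq
    refine MonoidHom.ext fun g => ?_
    by_cases hg : g ∈ A
    · exact (hφ ⟨g, hg⟩).trans (hψ ⟨g, hg⟩).symm
    · have h1 : g = b * (b⁻¹ * g) := by group
      have h2 : φ (b⁻¹ * g) = ψ (b⁻¹ * g) :=
        (hφ ⟨b⁻¹ * g, hmem g hg⟩).trans (hψ ⟨b⁻¹ * g, hmem g hg⟩).symm
      have e1 : φ g = φ b * φ (b⁻¹ * g) := by rw [← map_mul, ← h1]
      have e2 : ψ g = ψ b * ψ (b⁻¹ * g) := by rw [← map_mul, ← h1]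
      rw [e1, e2, hbeq, h2]
  set f : {χ : G →* ℂˣ // ∀ a : A, χ (a : G) = σ a} → {z : ℂˣ // z * z = c} :=
    fun χ => ⟨χ.1 b, by rw [← map_mul]; exact χ.2 ⟨b * b, hbb⟩⟩ with hf
  have hfbij : Function.Bijective f := by
    constructor
    · intro χ₁ χ₂ h
      exact Subtype.ext (uniq _ _ χ₁.2 χ₂.2 (Subtype.ext_iff.mp h))
    · intro z
      obtain ⟨χ, h1, h2⟩ := key z.1 z.2
      exact ⟨⟨χ, h1⟩, Subtype.ext h2⟩
  rw [Nat.card_congr (Equiv.ofBijective f hfbij)]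
  -- now count square roots of c in ℂˣ
  obtain ⟨w0, hw0⟩ : ∃ w0 : ℂ, w0 ^ 2 = (c : ℂ) := IsAlgClosed.exists_pow_nat_eq _ two_pos
  have hw0ne : w0 ≠ 0 := by
    intro h; rw [h] at hw0; simp at hw0
    exact c.ne_zero hw0.symm
  set w : ℂˣ := Units.mk0 w0 hw0ne with hwdef
  have hww : w * w = c := by
    ext; push_cast [hwdef]
    rw [← sq]; exact hw0
  have hwne : w ≠ -w := by
    intro h
    apply hw0ne
    have h2 : w0 = -w0 := by
      have := congrArg (Units.val) h
      simpa [hwdef] using this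
    linear_combination h2 / 2
  have e2 : {z : ℂˣ // z * z = c} ≃ ({w, -w} : Set ℂˣ) := by
    apply Equiv.subtypeEquivRight
    intro z
    simp only [Set.mem_insert_iff, Set.mem_singleton_iff]
    constructor
    · intro hzz
      have hval : (z : ℂ) ^ 2 = w0 ^ 2 := by
        rw [hw0, sq]
        exact_mod_cast congrArg Units.val hzz
      rcases sq_eq_sq_iff_eq_or_eq_neg.mp hval with h | h
      · left; ext; simpa [hwdef] using h
      · right; ext; simpa [hwdef] using h
    · rintro (rfl | rfl)
      · exact hww
      · rw [neg_mul_neg]; exact hww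
  rw [Nat.card_congr e2, Nat.card_coe_set_eq, Set.ncard_pair hwne]
end

section
/- Let G be a non-abelian finite group, A an abelian subgroup of G of index 2, and b an element of G not in A. Let σ : A → ℂ* be a group homomorphism with σ(b·a·b⁻¹) ≠ σ(a) for some a ∈ A, and let R ⊆ A be a set containing exactly one element from each conjugacy class of G contained in A. Then Σ_{a∈R} conj(σ(a) + σ(b·a·b⁻¹)) equals [A : B] if σ(c) = 1 for every c ∈ A with b·c·b⁻¹ = c, and equals 0 otherwise, where conj denotes complex conjugation and B = {(b·c·b⁻¹)·c⁻¹ : c ∈ A}. -/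
private lemma charsum0 {H : Type*} [Group H] [Fintype H] (χ : H →* ℂˣ)
    (h : ∃ y, χ y ≠ 1) : ∑ x : H, ((χ x : ℂˣ) : ℂ) = 0 := by
  obtain ⟨y, hy⟩ := h
  have hy' : ((χ y : ℂˣ) : ℂ) ≠ 1 := fun h => hy (Units.ext h)
  have h1 : ∑ x : H, ((χ (y * x) : ℂˣ) : ℂ) = ∑ x : H, ((χ x : ℂˣ) : ℂ) :=
    Fintype.sum_bijective _ (Group.mulLeft_bijective y) _ _ fun x => rfl
  have h2 : ((χ y : ℂˣ) : ℂ) * ∑ x : H, ((χ x : ℂˣ) : ℂ) = ∑ x : H, ((χ x : ℂˣ) : ℂ) := by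
    rw [Finset.mul_sum, ← h1]
    exact Finset.sum_congr rfl fun x _ => by rw [map_mul]; push_cast; ring
  have h3 : (((χ y : ℂˣ) : ℂ) - 1) * ∑ x : H, ((χ x : ℂˣ) : ℂ) = 0 := by
    rw [sub_mul, one_mul, h2, sub_self]
  rcases mul_eq_zero.mp h3 with h | h
  · exact absurd (by linear_combination h) hy'
  · exact h


/-- Let `G` be a non-abelian finite group, `A` an abelian subgroup of `G` of index 2, and
`b ∈ G \ A`.  Let `σ : A → ℂ*` be a group homomorphism with `σ(b * a * b⁻¹) ≠ σ(a)` for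
some `a ∈ A`, and let `R ⊆ A` contain exactly one element from each conjugacy class of
`G` contained in `A`.  Then `∑ a ∈ R, conj (σ(a) + σ(b * a * b⁻¹))` equals `[A : B]` if
`σ(c) = 1` for every `c ∈ A` with `b * c * b⁻¹ = c`, and equals `0` otherwise, where
`B = {(b * c * b⁻¹) * c⁻¹ : c ∈ A}`. -/
theorem stmt_17 {G : Type*} [Group G] [Finite G]
    (hG : ¬ ∀ x y : G, x * y = y * x) (A : Subgroup G)
    (hcomm : ∀ x ∈ A, ∀ y ∈ A, x * y = y * x) (hidx : A.index = 2)
    (b : G) (hb : b ∉ A)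
    (B : Subgroup G) (hB : (B : Set G) = {x : G | ∃ c ∈ A, b * c * b⁻¹ * c⁻¹ = x})
    (hBA : B ≤ A)
    (σ : A →* ℂˣ)
    (hσ : ∃ (a : G) (ha : a ∈ A) (ha' : b * a * b⁻¹ ∈ A),
      σ ⟨b * a * b⁻¹, ha'⟩ ≠ σ ⟨a, ha⟩)
    (R : Finset G) (hRA : ∀ r ∈ R, r ∈ A)
    (hR : ∀ g ∈ A, ∃! r : G, r ∈ R ∧ IsConj g r)
    (F : G → ℂ)
    (hF : ∀ (g : G) (hg : g ∈ A) (hg' : b * g * b⁻¹ ∈ A),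
      F g = starRingEnd ℂ ((σ ⟨g, hg⟩ : ℂ) + (σ ⟨b * g * b⁻¹, hg'⟩ : ℂ))) :
    ((∀ (c : G) (hc : c ∈ A), b * c * b⁻¹ = c → σ ⟨c, hc⟩ = 1) →
        ∑ a ∈ R, F a = (B.relIndex A : ℂ)) ∧
    ((¬ ∀ (c : G) (hc : c ∈ A), b * c * b⁻¹ = c → σ ⟨c, hc⟩ = 1) →
        ∑ a ∈ R, F a = 0) := by
  classical
  letI : Fintype G := Fintype.ofFinite G
  have hbinv : b⁻¹ ∉ A := fun h => hb (by simpa using inv_mem h)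
  -- conjugation by b preserves A
  have hmem : ∀ g ∈ A, b * g * b⁻¹ ∈ A := by
    intro g hg
    rw [Subgroup.mul_mem_iff_of_index_two hidx, Subgroup.mul_mem_iff_of_index_two hidx]
    simp [hg, hb, hbinv]
  -- b² commutes with A
  have hbb : b * b ∈ A := Subgroup.mul_self_mem_of_index_two hidx b
  have hinvol : ∀ g ∈ A, b * (b * g * b⁻¹) * b⁻¹ = g := by
    intro g hg
    have h1 : b * (b * g * b⁻¹) * b⁻¹ = (b * b) * g * (b * b)⁻¹ := by group
    rw [h1, hcomm _ hbb _ hg, mul_inv_cancel_right]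
  -- coset fact
  have hcoset : ∀ u : G, u ∉ A → b⁻¹ * u ∈ A := by
    intro u hu
    rw [Subgroup.mul_mem_iff_of_index_two hidx]
    simp [hbinv, hu]
  -- conjugacy classes in A
  have hconj : ∀ g ∈ A, ∀ r : G, IsConj g r ↔ (r = g ∨ r = b * g * b⁻¹) := by
    intro g hg r
    constructor
    · intro h
      obtain ⟨u, hu⟩ := isConj_iff.mp h
      by_cases huA : u ∈ A
      · left
        rw [← hu, hcomm _ huA _ hg, mul_inv_cancel_right]
      · right
        have hc : b⁻¹ * u ∈ A := hcoset u huA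
        have : u * g * u⁻¹ = b * ((b⁻¹ * u) * g * (b⁻¹ * u)⁻¹) * b⁻¹ := by group
        rw [← hu, this, hcomm _ hc _ hg, mul_inv_cancel_right]
    · rintro (rfl | rfl)
      · exact IsConj.refl _
      · exact isConj_iff.mpr ⟨b, rfl⟩
  -- fixed elements are in R
  have hFixR : ∀ g, g ∈ A → b * g * b⁻¹ = g → g ∈ R := by
    intro g hg hfix
    obtain ⟨r, ⟨hrR, hconj'⟩, _⟩ := hR g hg
    rcases (hconj g hg r).1 hconj' with rfl | h
    · exact hrR
    · rw [hfix] at h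
      rwa [← h]
  -- commutative group structure on A
  letI : CommGroup ↥A :=
    { (inferInstance : Group ↥A) with
      mul_comm := fun x y => Subtype.ext (hcomm _ x.2 _ y.2) }
  -- conjugation map on A
  set φA : ↥A → ↥A := fun a => ⟨b * ↑a * b⁻¹, hmem _ a.2⟩ with hφA
  have hφcoe : ∀ a : ↥A, (φA a : G) = b * ↑a * b⁻¹ := fun a => rfl
  have hφφ : ∀ a : ↥A, φA (φA a) = a := by
    intro a
    ext
    exact hinvol _ a.2
  have hφmul : ∀ x y : ↥A, φA (x * y) = φA x * φA y := by
    intro x y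
    ext
    show b * (↑x * ↑y) * b⁻¹ = (b * ↑x * b⁻¹) * (b * ↑y * b⁻¹)
    group
  -- the homomorphism δ : A → A, a ↦ (b a b⁻¹) a⁻¹
  set δ : ↥A →* ↥A :=
    { toFun := fun a => φA a * a⁻¹
      map_one' := by
        ext
        show b * 1 * b⁻¹ * (1 : G)⁻¹ = 1
        group
      map_mul' := by
        intro x y
        simp only [hφmul, mul_inv_rev]
        show φA x * φA y * (y⁻¹ * x⁻¹) = φA x * x⁻¹ * (φA y * y⁻¹)
        rw [mul_comm y⁻¹ x⁻¹, mul_mul_mul_comm] } with hδ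
  have hδapp : ∀ a : ↥A, δ a = φA a * a⁻¹ := fun a => rfl
  have hker : ∀ a : ↥A, a ∈ δ.ker ↔ b * ↑a * b⁻¹ = ↑a := by
    intro a
    rw [MonoidHom.mem_ker, hδapp, mul_inv_eq_one]
    constructor
    · intro h
      exact congrArg Subtype.val h
    · intro h
      exact Subtype.ext h
  have hrange : B.subgroupOf A = δ.range := by
    ext a
    rw [Subgroup.mem_subgroupOf, MonoidHom.mem_range]
    have hBa : (↑a ∈ B) ↔ ∃ c ∈ A, b * c * b⁻¹ * c⁻¹ = ↑a := by
      rw [← SetLike.mem_coe, hB]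
      exact Iff.rfl
    rw [hBa]
    constructor
    · rintro ⟨c, hc, hceq⟩
      exact ⟨⟨c, hc⟩, Subtype.ext hceq⟩
    · rintro ⟨c, hceq⟩
      exact ⟨↑c, c.2, congrArg Subtype.val hceq⟩
  have hrelindex : B.relIndex A = Nat.card δ.ker := by
    have h1 : δ.range.index * Nat.card δ.range = Nat.card ↥A := Subgroup.index_mul_card _
    have h2 : δ.ker.index * Nat.card δ.ker = Nat.card ↥A := Subgroup.index_mul_card _
    have h3 : δ.ker.index = Nat.card δ.range := Subgroup.index_ker δ
    have h4 : δ.ker.index ≠ 0 := Subgroup.index_ne_zero_of_finite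
    have h5 : δ.range.index * δ.ker.index = δ.ker.index * Nat.card δ.ker := by
      conv_lhs => rw [h3, h1]
      exact h2.symm
    have h6 : δ.range.index = Nat.card δ.ker :=
      Nat.eq_of_mul_eq_mul_right (Nat.pos_of_ne_zero h4)
        (by rw [h5, mul_comm])
    rw [Subgroup.relIndex, hrange, h6]
  -- sigma is nontrivial
  have hσ1 : ∃ y : ↥A, σ y ≠ 1 := by
    by_contra hcon
    push_neg at hcon
    obtain ⟨a, ha, ha', hne⟩ := hσ
    exact hne (by rw [hcon, hcon])
  have hS : ∑ a : ↥A, ((σ a : ℂˣ) : ℂ) = 0 := charsum0 σ hσ1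
  have hFA : ∀ a : ↥A, F ↑a = (starRingEnd ℂ) ((σ a : ℂ) + (σ (φA a) : ℂ)) := by
    intro a
    rw [hF ↑a a.2 (hmem _ a.2)]
  have hsum0 : ∑ a : ↥A, F ↑a = 0 := by
    have hre : ∑ a : ↥A, ((σ (φA a) : ℂˣ) : ℂ) = ∑ a : ↥A, ((σ a : ℂˣ) : ℂ) :=
      Fintype.sum_bijective φA (Function.Involutive.bijective hφφ) _ _ fun x => rfl
    calc ∑ a : ↥A, F ↑a
        = ∑ a : ↥A, (starRingEnd ℂ) ((σ a : ℂ) + (σ (φA a) : ℂ)) :=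
          Finset.sum_congr rfl fun a _ => hFA a
      _ = (starRingEnd ℂ) (∑ a : ↥A, ((σ a : ℂ) + (σ (φA a) : ℂ))) := (map_sum _ _ _).symm
      _ = (starRingEnd ℂ) ((∑ a : ↥A, (σ a : ℂ)) + ∑ a : ↥A, (σ (φA a) : ℂ)) := by
          rw [Finset.sum_add_distrib]
      _ = 0 := by rw [hre, hS]; simp
  -- Finset partition of A into R and the b-conjugates of non-fixed elements of R
  set NF : Finset G := R.filter (fun g => ¬ b * g * b⁻¹ = g) with hNFdef
  set FixR : Finset G := R.filter (fun g => b * g * b⁻¹ = g) with hFixdef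
  set NFb : Finset G := NF.image (fun g => b * g * b⁻¹) with hNFbdef
  have hRsplit : FixR ∪ NF = R := Finset.filter_union_filter_not_eq _ R
  have hRdisj : Disjoint FixR NF := Finset.disjoint_filter_filter_not R R _
  have hconjinj : Function.Injective (fun g : G => b * g * b⁻¹) := by
    intro x y h
    have h1 : b * x = b * y := mul_right_cancel h
    exact mul_left_cancel h1
  have hNFbR : ∀ x ∈ NFb, x ∉ R := by
    intro x hx hxR
    obtain ⟨g, hg, rfl⟩ := Finset.mem_image.mp hx
    obtain ⟨hgR, hgnf⟩ := Finset.mem_filter.mp hg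
    have hgA := hRA g hgR
    obtain ⟨r, _, huniq⟩ := hR g hgA
    have e1 : g = r := huniq g ⟨hgR, IsConj.refl g⟩
    have e2 : b * g * b⁻¹ = r := huniq _ ⟨hxR, isConj_iff.mpr ⟨b, rfl⟩⟩
    exact hgnf (e2.trans e1.symm)
  have hcover : ∀ g ∈ A, g ∈ R ∨ g ∈ NFb := by
    intro g hg
    obtain ⟨r, ⟨hrR, hconj'⟩, _⟩ := hR g hg
    rcases (hconj g hg r).1 hconj' with rfl | hr2
    · exact Or.inl hrR
    · by_cases hfix : b * g * b⁻¹ = g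
      · rw [hr2, hfix] at hrR
        exact Or.inl hrR
      · refine Or.inr (Finset.mem_image.mpr ⟨r, ?_, ?_⟩)
        · refine Finset.mem_filter.mpr ⟨hrR, ?_⟩
          intro hrfix
          apply hfix
          have hbg : b * r * b⁻¹ = g := by rw [hr2]; exact hinvol g hg
          rw [← hr2]
          exact hrfix.symm.trans hbg
        · rw [hr2]; exact hinvol g hg
  have hAF : Finset.image (fun a : ↥A => (a : G)) Finset.univ = R ∪ NFb := by
    ext g
    simp only [Finset.mem_image, Finset.mem_union, Finset.mem_univ, true_and]
    constructor
    · rintro ⟨a, rfl⟩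
      exact hcover _ a.2
    · intro h
      have hgA : g ∈ A := by
        rcases h with h | h
        · exact hRA g h
        · obtain ⟨g', hg', rfl⟩ := Finset.mem_image.mp h
          exact hmem _ (hRA g' (Finset.mem_filter.mp hg').1)
      exact ⟨⟨g, hgA⟩, rfl⟩
  have hsumA : ∑ a : ↥A, F ↑a = ∑ g ∈ R ∪ NFb, F g := by
    rw [← hAF, Finset.sum_image (fun x _ y _ h => Subtype.coe_injective h)]
  have hdisjRNFb : Disjoint R NFb := Finset.disjoint_right.mpr hNFbR
  have hsplit2 : ∑ g ∈ R ∪ NFb, F g = ∑ g ∈ R, F g + ∑ g ∈ NFb, F g :=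
    Finset.sum_union hdisjRNFb
  have hFb : ∀ g, ∀ _ : g ∈ A, F (b * g * b⁻¹) = F g := by
    intro g hg
    have hg' : b * (b * g * b⁻¹) * b⁻¹ ∈ A := by rw [hinvol g hg]; exact hg
    rw [hF g hg (hmem g hg), hF (b * g * b⁻¹) (hmem g hg) hg']
    have e : σ ⟨b * (b * g * b⁻¹) * b⁻¹, hg'⟩ = σ ⟨g, hg⟩ :=
      congrArg σ (Subtype.ext (hinvol g hg))
    rw [e, add_comm]
  have hNFbsum : ∑ g ∈ NFb, F g = ∑ g ∈ NF, F g := by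
    rw [hNFbdef, Finset.sum_image (fun x _ y _ h => hconjinj h)]
    exact Finset.sum_congr rfl fun g hg => hFb g (hRA g (Finset.mem_filter.mp hg).1)
  have hRsum : ∑ g ∈ R, F g = ∑ g ∈ FixR, F g + ∑ g ∈ NF, F g := by
    rw [← hRsplit, Finset.sum_union hRdisj]
  have hmain : ∑ g ∈ R, F g = (∑ g ∈ FixR, F g) / 2 := by
    have h0 : ∑ g ∈ FixR, F g + 2 * ∑ g ∈ NF, F g = 0 := by
      have h := hsum0
      rw [hsumA, hsplit2, hNFbsum, hRsum] at h
      linear_combination h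
    rw [hRsum]
    linear_combination h0 / 2
  have hFixker : ∀ g, g ∈ FixR ↔ (g ∈ A ∧ b * g * b⁻¹ = g) := by
    intro g
    rw [hFixdef, Finset.mem_filter]
    constructor
    · rintro ⟨h1, h2⟩; exact ⟨hRA g h1, h2⟩
    · rintro ⟨h1, h2⟩; exact ⟨hFixR g h1 h2, h2⟩
  set W : ℂ := ∑ x : ↥δ.ker, ((σ ↑x : ℂˣ) : ℂ) with hW
  have hFixsum : ∑ g ∈ FixR, F g = 2 * (starRingEnd ℂ) W := by
    have himg : FixR = Finset.image (fun x : ↥δ.ker => ((x : ↥A) : G)) Finset.univ := by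
      ext g
      simp only [Finset.mem_image, Finset.mem_univ, true_and]
      rw [hFixker]
      constructor
      · rintro ⟨h1, h2⟩
        exact ⟨⟨⟨g, h1⟩, (hker _).mpr h2⟩, rfl⟩
      · rintro ⟨x, rfl⟩
        exact ⟨((x : ↥A)).2, (hker _).mp x.2⟩
    rw [himg, Finset.sum_image
      (fun x _ y _ h => Subtype.coe_injective (Subtype.coe_injective h))]
    have key : ∀ x : ↥δ.ker, F ↑↑x = 2 * (starRingEnd ℂ) ((σ ↑x : ℂ)) := by
      intro x
      have hfix : φA ↑x = ↑x := Subtype.ext ((hker _).mp x.2)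
      rw [hFA, hfix, map_add]
      ring
    rw [Finset.sum_congr rfl (fun x _ => key x), hW, map_sum, Finset.mul_sum]
  constructor
  · intro htriv
    have hWval : W = (Nat.card ↥δ.ker : ℂ) := by
      have hone : ∀ x : ↥δ.ker, ((σ ↑x : ℂˣ) : ℂ) = 1 := by
        intro x
        have hx := (hker _).mp x.2
        have h1 : σ (↑x : ↥A) = 1 := htriv ↑↑x ((x : ↥A)).2 hx
        rw [h1, Units.val_one]
      rw [hW, Finset.sum_congr rfl (fun x _ => hone x)]
      simp [Nat.card_eq_fintype_card]
    rw [hmain, hFixsum, hWval, hrelindex, map_natCast]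
    ring
  · intro hnt
    push_neg at hnt
    obtain ⟨c, hc, hfix, hne⟩ := hnt
    have hWval : W = 0 := by
      have := charsum0 (σ.comp δ.ker.subtype)
        ⟨⟨⟨c, hc⟩, (hker _).mpr hfix⟩, hne⟩
      rw [hW]
      exact this
    rw [hmain, hFixsum, hWval]
    simp
end

section
/- Let G be a non-abelian finite group, A an abelian subgroup of G of index 2, and b an element of G not in A. Let χ : G → ℂ* be a group homomorphism such that χ(c) ≠ 1 for some c ∈ A with b·c·b⁻¹ = c. Then for any set R ⊆ G containing exactly one element from each conjugacy class of G, Σ_{g∈R} conj(χ(g)) = 0, where conj denotes complex conjugation. -/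
/-- Let `G` be a non-abelian finite group, `A` an abelian subgroup of `G` of index 2, and
`b ∈ G \ A`.  Let `χ : G → ℂ*` be a group homomorphism such that `χ(c) ≠ 1` for some
`c ∈ A` with `b * c * b⁻¹ = c`.  Then for any set `R ⊆ G` containing exactly one element
from each conjugacy class of `G`, `∑ g ∈ R, conj (χ g) = 0`. -/
theorem stmt_18 {G : Type*} [Group G] [Finite G]
    (hG : ¬ ∀ x y : G, x * y = y * x) (A : Subgroup G)
    (hcomm : ∀ x ∈ A, ∀ y ∈ A, x * y = y * x) (hidx : A.index = 2)
    (b : G) (hb : b ∉ A)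
    (χ : G →* ℂˣ) (hχ : ∃ c ∈ A, b * c * b⁻¹ = c ∧ χ c ≠ 1)
    (R : Finset G) (hR : ∀ g : G, ∃! r : G, r ∈ R ∧ IsConj g r) :
    ∑ g ∈ R, starRingEnd ℂ (χ g : ℂ) = 0 := by
  classical
  obtain ⟨c, hcA, hcb, hc1⟩ := hχ
  -- c commutes with b
  have hcbcomm : c * b = b * c := by
    have h1 : b * c * b⁻¹ * b = c * b := by rw [hcb]
    simpa [mul_assoc] using h1.symm
  -- c is central
  have hcentral : ∀ g : G, c * g = g * c := by
    intro g
    by_cases hg : g ∈ A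
    · exact hcomm c hcA g hg
    · have hbinv : b⁻¹ ∉ A := fun h => hb (by simpa using A.inv_mem h)
      have ha : g * b⁻¹ ∈ A := by
        rw [Subgroup.mul_mem_iff_of_index_two hidx]
        exact ⟨fun h => absurd h hg, fun h => absurd h hbinv⟩
      calc c * g = c * ((g * b⁻¹) * b) := by group
        _ = (g * b⁻¹) * c * b := by rw [← mul_assoc, hcomm c hcA _ ha]
        _ = (g * b⁻¹) * (b * c) := by rw [mul_assoc, hcbcomm]
        _ = g * c := by group
  -- χ is constant on conjugacy classes
  have hχconj : ∀ x y : G, IsConj x y → χ x = χ y := by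
    intro x y hxy
    obtain ⟨u, hu⟩ := isConj_iff.mp hxy
    calc χ x = χ u * χ x * (χ u)⁻¹ := by rw [mul_comm (χ u), mul_assoc, mul_inv_cancel, mul_one]
      _ = χ (u * x * u⁻¹) := by rw [map_mul, map_mul, map_inv]
      _ = χ y := by rw [hu]
  -- the reindexing maps
  set f : G → G := fun r => (hR (c * r)).choose with hf
  set f' : G → G := fun r => (hR (c⁻¹ * r)).choose with hf'
  have hfspec : ∀ r : G, f r ∈ R ∧ IsConj (c * r) (f r) := fun r => (hR (c * r)).choose_spec.1
  have hf'spec : ∀ r : G, f' r ∈ R ∧ IsConj (c⁻¹ * r) (f' r) := fun r => (hR (c⁻¹ * r)).choose_spec.1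
  have hleft : ∀ r ∈ R, f' (f r) = r := by
    intro r hr
    obtain ⟨u, hu⟩ := isConj_iff.mp (hfspec r).2
    have hconj : IsConj (c⁻¹ * f r) r := by
      refine (isConj_iff.mpr ⟨u⁻¹, ?_⟩)
      have : c⁻¹ * f r = u * r * u⁻¹ := by
        rw [← hu]
        calc c⁻¹ * (u * (c * r) * u⁻¹) = c⁻¹ * (u * c * r * u⁻¹) := by group
          _ = c⁻¹ * (c * u * r * u⁻¹) := by rw [hcentral u]
          _ = u * r * u⁻¹ := by group
      rw [this]; group
    exact ((hR (c⁻¹ * f r)).unique ((hR (c⁻¹ * f r)).choose_spec.1 : f' (f r) ∈ R ∧ _)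
      ⟨hr, hconj⟩)
  have hright : ∀ r ∈ R, f (f' r) = r := by
    intro r hr
    obtain ⟨u, hu⟩ := isConj_iff.mp (hf'spec r).2
    have hconj : IsConj (c * f' r) r := by
      refine (isConj_iff.mpr ⟨u⁻¹, ?_⟩)
      have : c * f' r = u * r * u⁻¹ := by
        rw [← hu]
        calc c * (u * (c⁻¹ * r) * u⁻¹) = c * (u * c⁻¹ * r * u⁻¹) := by group
          _ = c * (c⁻¹ * u * r * u⁻¹) := by
              congr 1
              have : c * (u * c⁻¹) = c * (c⁻¹ * u) := by
                congr 1
                have h2 := hcentral u⁻¹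
                calc u * c⁻¹ = (c * u⁻¹)⁻¹ := by group
                  _ = (u⁻¹ * c)⁻¹ := by rw [h2]
                  _ = c⁻¹ * u := by group
              calc u * c⁻¹ * r * u⁻¹ = (u * c⁻¹) * (r * u⁻¹) := by group
                _ = (c⁻¹ * u) * (r * u⁻¹) := by
                    have h2 := hcentral u⁻¹
                    have : u * c⁻¹ = c⁻¹ * u := by
                      calc u * c⁻¹ = (c * u⁻¹)⁻¹ := by group
                        _ = (u⁻¹ * c)⁻¹ := by rw [h2]
                        _ = c⁻¹ * u := by group
                    rw [this]
                _ = c⁻¹ * u * r * u⁻¹ := by group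
          _ = u * r * u⁻¹ := by group
      rw [this]; group
    exact ((hR (c * f' r)).unique ((hR (c * f' r)).choose_spec.1 : f (f' r) ∈ R ∧ _)
      ⟨hr, hconj⟩)
  -- the sum identity
  have hsum : ∑ r ∈ R, starRingEnd ℂ ((χ (f r) : ℂ)) = ∑ g ∈ R, starRingEnd ℂ ((χ g : ℂ)) := by
    refine Finset.sum_nbij' f f' (fun r hr => (hfspec r).1) (fun r hr => (hf'spec r).1)
      hleft hright (fun r hr => rfl)
  have hval : ∀ r : G, (χ (f r) : ℂ) = (χ c : ℂ) * (χ r : ℂ) := by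
    intro r
    have := hχconj _ _ (hfspec r).2
    rw [← this, map_mul]
    push_cast
    ring
  set S : ℂ := ∑ g ∈ R, starRingEnd ℂ ((χ g : ℂ)) with hS
  have key : starRingEnd ℂ ((χ c : ℂ)) * S = S := by
    calc starRingEnd ℂ ((χ c : ℂ)) * S
        = ∑ r ∈ R, starRingEnd ℂ ((χ c : ℂ)) * starRingEnd ℂ ((χ r : ℂ)) := by
          rw [hS, Finset.mul_sum]
      _ = ∑ r ∈ R, starRingEnd ℂ ((χ (f r) : ℂ)) := by
          refine Finset.sum_congr rfl fun r hr => ?_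
          rw [hval r, map_mul]
      _ = S := hsum
  have hne : starRingEnd ℂ ((χ c : ℂ)) ≠ 1 := by
    intro h
    apply hc1
    have : (χ c : ℂ) = 1 := by
      have := congrArg (starRingEnd ℂ) h
      simpa using this
    exact Units.ext (by simpa using this)
  have : (starRingEnd ℂ ((χ c : ℂ)) - 1) * S = 0 := by
    rw [sub_mul, one_mul, key, sub_self]
  rcases mul_eq_zero.mp this with h | h
  · exact absurd (sub_eq_zero.mp h) hne
  · exact h
end
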